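/- arXiv:1511.04516 — 3 statements merged into one kernel-verified Lean document; each statement's English description precedes it below -/
import Mathlib

section
/- Let M be an n×n complex Hermitian matrix, N an m×n complex matrix, and S an m×m unitary matrix. Let N = V N̂ W† be a singular value decomposition of N, where V is m×m unitary, W is n×n unitary, and N̂ is the m×n matrix with block form N̂ = [[N̄, 0],[0, 0]] where N̄ = diag(√κ₁, …, √κ_r) with κ_i > 0 and r = rank N. Then for every s ∈ ℂ such that s·I_n + i·M + (1/2)·N†N is invertible, the matrix s·I_n + i·(W†MW) + (1/2)·N̂†N̂ is also invertible, and the transfer function factorizes as [I_m − N·(s·I_n + i·M + (1/2)·N†N)^{-1}·N†]·S = V·[I_m − N̂·(s·I_n + i·(W†MW) + (1/2)·N̂†N̂)^{-1}·N̂†]·(V†S). -/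
/-!
Write `N = V N̂ W†` with `V`, `W` unitary. Then `N†N = W N̂†N̂ W†`, so
`sI + iM + N†N/2 = W (sI + i W†MW + N̂†N̂/2) W†`: the two resolvent matrices are unitarily
conjugate, hence invertible together, and inversion commutes with the conjugation.
Substituting into `I − N (⋯)⁻¹ N†`, the factors `W`, `W†` cancel and `V`, `V†` come out on
either side.
-/

open Matrix

noncomputable section

variable {m n : Type*} [Fintype m] [DecidableEq n]

/-- `sI − A` for the drift matrix `A = −iM − N†N/2` of the system. -/
def passiveCharMatrix (s : ℂ) (M : Matrix n n ℂ) (N : Matrix m n ℂ) : Matrix n n ℂ :=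
  s • 1 + Complex.I • M + (1 / 2 : ℂ) • (Nᴴ * N)

def passiveTransferFunction [Fintype n] [DecidableEq m] (s : ℂ) (M : Matrix n n ℂ)
    (N : Matrix m n ℂ) (S : Matrix m m ℂ) : Matrix m m ℂ :=
  (1 - N * (passiveCharMatrix s M N)⁻¹ * Nᴴ) * S

theorem passiveCharMatrix_isometry_mul {m' : Type*} [Fintype m'] [DecidableEq m]
    {V : Matrix m' m ℂ} (hV : Vᴴ * V = 1) (s : ℂ) (M : Matrix n n ℂ) (N : Matrix m n ℂ) :
    passiveCharMatrix s M (V * N) = passiveCharMatrix s M N := by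
  rw [passiveCharMatrix, passiveCharMatrix, conjTranspose_mul, Matrix.mul_assoc,
    ← Matrix.mul_assoc Vᴴ, hV, Matrix.one_mul]

theorem passiveCharMatrix_conj_of_mem_unitaryGroup [Fintype n] {W : Matrix n n ℂ}
    (hW : W ∈ unitaryGroup n ℂ) (s : ℂ) (M : Matrix n n ℂ) (N : Matrix m n ℂ) :
    passiveCharMatrix s (Wᴴ * M * W) N = Wᴴ * passiveCharMatrix s M (N * Wᴴ) * W := by
  have hWW : Wᴴ * W = 1 := hW.1
  simp only [passiveCharMatrix, conjTranspose_mul, conjTranspose_conjTranspose, Matrix.mul_add,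
    Matrix.add_mul, Matrix.mul_smul, Matrix.smul_mul, Matrix.mul_one, hWW, Matrix.mul_assoc]
  rw [← Matrix.mul_assoc Wᴴ W, hWW, Matrix.one_mul]

/-- No invertibility is needed: `Matrix.inv` is `0` on singular matrices, and unitary conjugation
preserves singularity. -/
theorem inv_conj_of_mem_unitaryGroup [Fintype n] {W : Matrix n n ℂ} (hW : W ∈ unitaryGroup n ℂ)
    (A : Matrix n n ℂ) :
    (Wᴴ * A * W)⁻¹ = Wᴴ * A⁻¹ * W := by
  have hWW : Wᴴ * W = 1 := hW.1
  have hWW' : W * Wᴴ = 1 := hW.2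
  rw [Matrix.mul_inv_rev, Matrix.mul_inv_rev, inv_eq_left_inv hWW, inv_eq_left_inv hWW',
    Matrix.mul_assoc]

theorem passiveTransferFunction_unitary_mul [Fintype n] [DecidableEq m] {V : Matrix m m ℂ}
    (hV : V ∈ unitaryGroup m ℂ) (s : ℂ) (M : Matrix n n ℂ) (N : Matrix m n ℂ)
    (S : Matrix m m ℂ) :
    passiveTransferFunction s M (V * N) S = V * passiveTransferFunction s M N (Vᴴ * S) := by
  have hVV' : V * Vᴴ = 1 := hV.2
  rw [passiveTransferFunction, passiveTransferFunction, passiveCharMatrix_isometry_mul hV.1,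
    conjTranspose_mul]
  simp only [Matrix.sub_mul, Matrix.mul_sub, Matrix.one_mul, Matrix.mul_assoc]
  rw [← Matrix.mul_assoc V Vᴴ, hVV', Matrix.one_mul]

theorem passiveTransferFunction_mul_conjTranspose [Fintype n] [DecidableEq m] {W : Matrix n n ℂ}
    (hW : W ∈ unitaryGroup n ℂ) (s : ℂ) (M : Matrix n n ℂ) (N : Matrix m n ℂ)
    (S : Matrix m m ℂ) :
    passiveTransferFunction s M (N * Wᴴ) S = passiveTransferFunction s (Wᴴ * M * W) N S := by
  rw [passiveTransferFunction, passiveTransferFunction,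
    passiveCharMatrix_conj_of_mem_unitaryGroup hW, inv_conj_of_mem_unitaryGroup hW,
    conjTranspose_mul, conjTranspose_conjTranspose]
  simp only [Matrix.mul_assoc]

end

theorem passive_transfer_function_factorization_general (r m' n' : ℕ)
    (M : Matrix (Fin r ⊕ Fin n') (Fin r ⊕ Fin n') ℂ)
    (N : Matrix (Fin r ⊕ Fin m') (Fin r ⊕ Fin n') ℂ)
    (S : Matrix (Fin r ⊕ Fin m') (Fin r ⊕ Fin m') ℂ)
    (V : Matrix (Fin r ⊕ Fin m') (Fin r ⊕ Fin m') ℂ)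
    (hV : V ∈ Matrix.unitaryGroup (Fin r ⊕ Fin m') ℂ)
    (W : Matrix (Fin r ⊕ Fin n') (Fin r ⊕ Fin n') ℂ)
    (hW : W ∈ Matrix.unitaryGroup (Fin r ⊕ Fin n') ℂ)
    (Nh : Matrix (Fin r ⊕ Fin m') (Fin r ⊕ Fin n') ℂ)
    (hSVD : N = V * Nh * Wᴴ) :
    ∀ s : ℂ,
      IsUnit (s • (1 : Matrix (Fin r ⊕ Fin n') (Fin r ⊕ Fin n') ℂ)
          + Complex.I • M + (1 / 2 : ℂ) • (Nᴴ * N)) →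
      IsUnit (s • (1 : Matrix (Fin r ⊕ Fin n') (Fin r ⊕ Fin n') ℂ)
          + Complex.I • (Wᴴ * M * W) + (1 / 2 : ℂ) • (Nhᴴ * Nh)) ∧
      (1 - N * (s • (1 : Matrix (Fin r ⊕ Fin n') (Fin r ⊕ Fin n') ℂ)
            + Complex.I • M + (1 / 2 : ℂ) • (Nᴴ * N))⁻¹ * Nᴴ) * S
        = V * (1 - Nh * (s • (1 : Matrix (Fin r ⊕ Fin n') (Fin r ⊕ Fin n') ℂ)
            + Complex.I • (Wᴴ * M * W) + (1 / 2 : ℂ) • (Nhᴴ * Nh))⁻¹ * Nhᴴ) * (Vᴴ * S) := by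
  intro s hA
  have hchar : passiveCharMatrix s (Wᴴ * M * W) Nh = Wᴴ * passiveCharMatrix s M N * W := by
    rw [passiveCharMatrix_conj_of_mem_unitaryGroup hW, hSVD, Matrix.mul_assoc V Nh,
      passiveCharMatrix_isometry_mul hV.1]
  refine ⟨?_, ?_⟩
  · change IsUnit (passiveCharMatrix s (Wᴴ * M * W) Nh)
    rw [hchar]
    exact ((Unitary.isUnit_coe (U := ⟨Wᴴ, Unitary.star_mem hW⟩)).mul hA).mul
      (Unitary.isUnit_coe (U := ⟨W, hW⟩))
  · rw [Matrix.mul_assoc V]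
    change passiveTransferFunction s M N S
      = V * passiveTransferFunction s (Wᴴ * M * W) Nh (Vᴴ * S)
    rw [hSVD, Matrix.mul_assoc V, passiveTransferFunction_unitary_mul hV,
      passiveTransferFunction_mul_conjTranspose hW]

/-- Factorization of the transfer function of a passive linear quantum
stochastic system via the SVD of the coupling matrix.  The rows of `N` are
indexed by `Fin r ⊕ Fin m'` (so `m = r + m'`) and its columns by
`Fin r ⊕ Fin n'` (so `n = r + n'`), where `r = rank N`.  Given the SVD
`N = V N̂ W†` with `N̂ = [[diag(√κᵢ), 0],[0, 0]]`, for every `s` for which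
`sI + iM + (1/2)N†N` is invertible, `sI + i(W†MW) + (1/2)N̂†N̂` is invertible
and the transfer function factorizes as
`[I − N(sI + iM + N†N/2)⁻¹N†]S = V[I − N̂(sI + i W†MW + N̂†N̂/2)⁻¹N̂†](V†S)`. -/
theorem passive_transfer_function_factorization (r m' n' : ℕ)
    (M : Matrix (Fin r ⊕ Fin n') (Fin r ⊕ Fin n') ℂ) (hM : M.IsHermitian)
    (N : Matrix (Fin r ⊕ Fin m') (Fin r ⊕ Fin n') ℂ)
    (S : Matrix (Fin r ⊕ Fin m') (Fin r ⊕ Fin m') ℂ)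
    (hS : S ∈ Matrix.unitaryGroup (Fin r ⊕ Fin m') ℂ)
    (V : Matrix (Fin r ⊕ Fin m') (Fin r ⊕ Fin m') ℂ)
    (hV : V ∈ Matrix.unitaryGroup (Fin r ⊕ Fin m') ℂ)
    (W : Matrix (Fin r ⊕ Fin n') (Fin r ⊕ Fin n') ℂ)
    (hW : W ∈ Matrix.unitaryGroup (Fin r ⊕ Fin n') ℂ)
    (κ : Fin r → ℝ) (hκ : ∀ i, 0 < κ i)
    (Nh : Matrix (Fin r ⊕ Fin m') (Fin r ⊕ Fin n') ℂ)
    (hNh : Nh = Matrix.fromBlocks (Matrix.diagonal fun i => (Real.sqrt (κ i) : ℂ)) 0 0 0)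
    (hrank : N.rank = r)
    (hSVD : N = V * Nh * Wᴴ) :
    ∀ s : ℂ,
      IsUnit (s • (1 : Matrix (Fin r ⊕ Fin n') (Fin r ⊕ Fin n') ℂ)
          + Complex.I • M + (1 / 2 : ℂ) • (Nᴴ * N)) →
      IsUnit (s • (1 : Matrix (Fin r ⊕ Fin n') (Fin r ⊕ Fin n') ℂ)
          + Complex.I • (Wᴴ * M * W) + (1 / 2 : ℂ) • (Nhᴴ * Nh)) ∧
      (1 - N * (s • (1 : Matrix (Fin r ⊕ Fin n') (Fin r ⊕ Fin n') ℂ)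
            + Complex.I • M + (1 / 2 : ℂ) • (Nᴴ * N))⁻¹ * Nᴴ) * S
        = V * (1 - Nh * (s • (1 : Matrix (Fin r ⊕ Fin n') (Fin r ⊕ Fin n') ℂ)
            + Complex.I • (Wᴴ * M * W) + (1 / 2 : ℂ) • (Nhᴴ * Nh))⁻¹ * Nhᴴ) * (Vᴴ * S) :=
  passive_transfer_function_factorization_general r m' n' M N S V hV W hW Nh hSVD
end

section
/- Let M and M̄ be 2n×2n complex matrices that are both Hermitian and doubled-up, and let Ñ = diag(√κ̃₁, …, √κ̃_n, √κ̃₁, …, √κ̃_n) with κ̃_i > 0. Define X = 2i·(Ñ^♭)^{-1}·(J_{2n}M̄ − J_{2n}M)·Ñ^{-1}. Then: (i) X is doubled-up and ♭-skew-Hermitian (X^♭ = −X), and it is the unique 2n×2n complex matrix satisfying J_{2n}M̄ = J_{2n}M − (i/2)·Ñ^♭XÑ; (ii) if in addition I + X is invertible, then R := (X − I)(X + I)^{-1} is a Bogoliubov matrix, I − R is invertible, (I + R)(I − R)^{-1} = X, and R is the unique Bogoliubov matrix without eigenvalue 1 with this property; (iii) consequently, for any 2m×2n doubled-up matrix N,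 the modified drift matrix −i·J_{2n}M − (1/2)·Ñ^♭Ñ − (1/2)·N^♭N − Ñ^♭·R(I − R)^{-1}·Ñ equals the drift matrix −i·J_{2n}M̄ − (1/2)·N^♭N of a linear quantum stochastic system with Hamiltonian matrix M̄. -/
/-!
Since `Ñ` is real, diagonal and block-symmetric, it is doubled-up and `Ñ^♭ = Ñ`, so the defining
equation of `X` is solved uniquely by a congruence with `Ñ⁻¹`, and `X` inherits from
`2i·J(M̄ − M)` being doubled-up (as `ΣJΣ = −J`) and ♭-skew-Hermitian (as `M̄ − M` is Hermitian).
The Cayley transform `R = (X − 1)(X + 1)⁻¹` of a ♭-skew-Hermitian `X` is ♭-unitary because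
`(X − 1)^♭(X − 1) = −(X + 1)(X − 1) = (X + 1)^♭(X + 1)`, and `1 − R = 2(X + 1)⁻¹` gives
`X = (1 + R)(1 − R)⁻¹`.
Finally `R(1 − R)⁻¹ = (X − 1)/2`, so the feedback term cancels `−½Ñ^♭Ñ` and adds
`−½Ñ^♭XÑ = −i(JM̄ − JM)`.
-/

open Matrix

noncomputable section

/-- The Krein-space metric `J_{2k} = diag(I_k, -I_k)`. -/
def Jmat (k : ℕ) : Matrix (Fin k ⊕ Fin k) (Fin k ⊕ Fin k) ℂ :=
  Matrix.fromBlocks 1 0 0 (-1)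

/-- The block-swap matrix `Σ_{2k} = [[0, I_k],[I_k, 0]]`. -/
def Sig (k : ℕ) : Matrix (Fin k ⊕ Fin k) (Fin k ⊕ Fin k) ℂ :=
  Matrix.fromBlocks 0 1 1 0

/-- A `2r × 2s` complex matrix is doubled-up if `Σ_{2r} X Σ_{2s} = X^#`. -/
def DoubledUp {r s : ℕ} (X : Matrix (Fin r ⊕ Fin r) (Fin s ⊕ Fin s) ℂ) : Prop :=
  Sig r * X * Sig s = X.map (starRingEnd ℂ)

/-- The ♭-adjoint `X^♭ = J_{2s} X† J_{2r}` of a `2r × 2s` complex matrix. -/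
def flatAdj {r s : ℕ} (X : Matrix (Fin r ⊕ Fin r) (Fin s ⊕ Fin s) ℂ) :
    Matrix (Fin s ⊕ Fin s) (Fin r ⊕ Fin r) ℂ :=
  Jmat s * Xᴴ * Jmat r

def Bogoliubov {k : ℕ} (R : Matrix (Fin k ⊕ Fin k) (Fin k ⊕ Fin k) ℂ) : Prop :=
  DoubledUp R ∧ R * flatAdj R = 1 ∧ flatAdj R * R = 1

lemma Jmat_mul_Jmat (k : ℕ) : Jmat k * Jmat k = 1 := by
  simp [Jmat, fromBlocks_multiply, ← fromBlocks_one]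

lemma Sig_mul_Sig (k : ℕ) : Sig k * Sig k = 1 := by
  simp [Sig, fromBlocks_multiply, ← fromBlocks_one]

lemma Sig_mul_Jmat_mul_Sig (k : ℕ) : Sig k * Jmat k * Sig k = -Jmat k := by
  simp [Jmat, Sig, fromBlocks_multiply, fromBlocks_neg]

lemma Jmat_eq_diagonal (k : ℕ) : Jmat k = diagonal (Sum.elim 1 (-1)) := by
  rw [Jmat, ← diagonal_one, diagonal_neg, fromBlocks_diagonal]
  rfl

lemma conjTranspose_Jmat (k : ℕ) : (Jmat k)ᴴ = Jmat k := by
  simp [Jmat, fromBlocks_conjTranspose]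

lemma Jmat_map_conj (k : ℕ) : (Jmat k).map (starRingEnd ℂ) = Jmat k := by
  rw [Jmat_eq_diagonal, diagonal_map (map_zero _)]
  congr 1
  ext (i | i) <;> simp

lemma inv_Jmat (k : ℕ) : (Jmat k)⁻¹ = Jmat k := inv_eq_right_inv (Jmat_mul_Jmat k)

lemma isUnit_Jmat (k : ℕ) : IsUnit (Jmat k) := IsUnit.of_mul_eq_one _ (Jmat_mul_Jmat k)

section FlatAdjoint

variable {r s t k : ℕ}

lemma flatAdj_mul (A : Matrix (Fin r ⊕ Fin r) (Fin s ⊕ Fin s) ℂ)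
    (B : Matrix (Fin s ⊕ Fin s) (Fin t ⊕ Fin t) ℂ) :
    flatAdj (A * B) = flatAdj B * flatAdj A := by
  simp only [flatAdj, conjTranspose_mul, Matrix.mul_assoc]
  rw [← Matrix.mul_assoc (Jmat s) (Jmat s), Jmat_mul_Jmat, Matrix.one_mul]

lemma flatAdj_one : flatAdj (1 : Matrix (Fin k ⊕ Fin k) (Fin k ⊕ Fin k) ℂ) = 1 := by
  simp [flatAdj, Jmat_mul_Jmat]

lemma flatAdj_add (A B : Matrix (Fin r ⊕ Fin r) (Fin s ⊕ Fin s) ℂ) :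
    flatAdj (A + B) = flatAdj A + flatAdj B := by
  simp [flatAdj, Matrix.add_mul, Matrix.mul_add]

lemma flatAdj_sub (A B : Matrix (Fin r ⊕ Fin r) (Fin s ⊕ Fin s) ℂ) :
    flatAdj (A - B) = flatAdj A - flatAdj B := by
  simp [flatAdj, Matrix.sub_mul, Matrix.mul_sub]

lemma flatAdj_smul (c : ℂ) (A : Matrix (Fin r ⊕ Fin r) (Fin s ⊕ Fin s) ℂ) :
    flatAdj (c • A) = starRingEnd ℂ c • flatAdj A := by
  simp [flatAdj]

lemma flatAdj_inv (A : Matrix (Fin k ⊕ Fin k) (Fin k ⊕ Fin k) ℂ) :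
    flatAdj A⁻¹ = (flatAdj A)⁻¹ := by
  rw [flatAdj, flatAdj, conjTranspose_nonsing_inv, Matrix.mul_inv_rev, Matrix.mul_inv_rev,
    inv_Jmat, Matrix.mul_assoc]

lemma IsUnit.flatAdj {A : Matrix (Fin k ⊕ Fin k) (Fin k ⊕ Fin k) ℂ} (h : IsUnit A) :
    IsUnit (flatAdj A) :=
  ((isUnit_Jmat k).mul ((isUnit_conjTranspose A).mpr h)).mul (isUnit_Jmat k)

lemma flatAdj_smul_Jmat_mul {H : Matrix (Fin k ⊕ Fin k) (Fin k ⊕ Fin k) ℂ} (hH : H.IsHermitian)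
    (c : ℂ) : flatAdj (c • (Jmat k * H)) = starRingEnd ℂ c • (Jmat k * H) := by
  rw [flatAdj_smul, flatAdj, conjTranspose_mul, conjTranspose_Jmat, hH.eq, Matrix.mul_assoc,
    Matrix.mul_assoc, Jmat_mul_Jmat, Matrix.mul_one]

end FlatAdjoint

section DoubledUp

variable {r s t k : ℕ}

lemma DoubledUp.mul {A : Matrix (Fin r ⊕ Fin r) (Fin s ⊕ Fin s) ℂ}
    {B : Matrix (Fin s ⊕ Fin s) (Fin t ⊕ Fin t) ℂ} (hA : DoubledUp A) (hB : DoubledUp B) :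
    DoubledUp (A * B) := by
  rw [DoubledUp, Matrix.map_mul, ← hA, ← hB]
  simp only [Matrix.mul_assoc]
  rw [← Matrix.mul_assoc (Sig s) (Sig s), Sig_mul_Sig, Matrix.one_mul]

lemma DoubledUp.add {A B : Matrix (Fin r ⊕ Fin r) (Fin s ⊕ Fin s) ℂ}
    (hA : DoubledUp A) (hB : DoubledUp B) : DoubledUp (A + B) := by
  rw [DoubledUp, Matrix.map_add _ (map_add _), ← hA, ← hB, Matrix.mul_add, Matrix.add_mul]

lemma DoubledUp.sub {A B : Matrix (Fin r ⊕ Fin r) (Fin s ⊕ Fin s) ℂ}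
    (hA : DoubledUp A) (hB : DoubledUp B) : DoubledUp (A - B) := by
  rw [DoubledUp, Matrix.map_sub _ (map_sub _), ← hA, ← hB, Matrix.mul_sub, Matrix.sub_mul]

lemma doubledUp_one : DoubledUp (1 : Matrix (Fin k ⊕ Fin k) (Fin k ⊕ Fin k) ℂ) := by
  rw [DoubledUp, Matrix.mul_one, Sig_mul_Sig, Matrix.map_one _ (map_zero _) (map_one _)]

lemma DoubledUp.inv {A : Matrix (Fin k ⊕ Fin k) (Fin k ⊕ Fin k) ℂ} (hA : DoubledUp A) :
    DoubledUp A⁻¹ := by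
  have hSig : (Sig k)⁻¹ = Sig k := inv_eq_right_inv (Sig_mul_Sig k)
  have hmap : A⁻¹.map (starRingEnd ℂ) = (A.map (starRingEnd ℂ))⁻¹ := by
    -- entrywise conjugation is `(·)ᵀᴴ`
    change A⁻¹ᵀᴴ = Aᵀᴴ⁻¹
    rw [transpose_nonsing_inv, conjTranspose_nonsing_inv]
  rw [DoubledUp, hmap, ← hA, Matrix.mul_inv_rev, Matrix.mul_inv_rev, hSig, Matrix.mul_assoc]

lemma DoubledUp.smul_Jmat_mul {H : Matrix (Fin k ⊕ Fin k) (Fin k ⊕ Fin k) ℂ} (hH : DoubledUp H)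
    {c : ℂ} (hc : starRingEnd ℂ c = -c) : DoubledUp (c • (Jmat k * H)) := by
  rw [DoubledUp, Matrix.map_smul' _ _ _ (map_mul _), Matrix.map_mul, Jmat_map_conj, ← hH, hc]
  calc Sig k * (c • (Jmat k * H)) * Sig k
        = c • ((Sig k * Jmat k * Sig k) * (Sig k * H * Sig k)) := by
        simp only [Matrix.mul_smul, Matrix.smul_mul, Matrix.mul_assoc]
        rw [← Matrix.mul_assoc (Sig k) (Sig k), Sig_mul_Sig, Matrix.one_mul]
    _ = -c • (Jmat k * (Sig k * H * Sig k)) := by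
        rw [Sig_mul_Jmat_mul_Sig, Matrix.neg_mul, smul_neg, neg_smul]

end DoubledUp

section Diagonal

variable {k : ℕ} (d : Fin k → ℝ)

lemma flatAdj_diagonal_ofReal :
    flatAdj (diagonal (Sum.elim (fun i => (d i : ℂ)) (fun i => (d i : ℂ)))) =
      diagonal (Sum.elim (fun i => (d i : ℂ)) (fun i => (d i : ℂ))) := by
  rw [flatAdj, Jmat_eq_diagonal, diagonal_conjTranspose, diagonal_mul_diagonal,
    diagonal_mul_diagonal]
  congr 1
  ext (i | i) <;> simp

lemma doubledUp_diagonal_ofReal :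
    DoubledUp (diagonal (Sum.elim (fun i => (d i : ℂ)) (fun i => (d i : ℂ)))) := by
  ext (i | i) (j | j) <;> simp [Sig, ← fromBlocks_diagonal, fromBlocks_multiply, diagonal_apply,
    apply_ite (starRingEnd ℂ)]

lemma isUnit_diagonal_ofReal (hd : ∀ i, d i ≠ 0) :
    IsUnit (diagonal (Sum.elim (fun i => (d i : ℂ)) (fun i => (d i : ℂ)))) :=
  isUnit_diagonal.mpr <| Pi.isUnit_iff.mpr fun
    | .inl i | .inr i => isUnit_iff_ne_zero.mpr (Complex.ofReal_ne_zero.mpr (hd i))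

end Diagonal

lemma eq_sub_smul_mul_mul_iff {ι K : Type*} [Fintype ι] [DecidableEq ι] [Field K]
    {N : Matrix ι ι K} (hN : IsUnit N) {c : K} (hc : c ≠ 0) (A B Y : Matrix ι ι K) :
    B = A - c • (N * Y * N) ↔ Y = (-c⁻¹) • (N⁻¹ * (B - A) * N⁻¹) := by
  have hd := (isUnit_iff_isUnit_det N).mp hN
  constructor
  · rintro rfl
    simp [Matrix.mul_assoc, nonsing_inv_mul_cancel_left _ _ hd, mul_nonsing_inv _ hd, smul_smul,
      hc]
  · rintro rfl
    simp [← Matrix.mul_assoc, mul_nonsing_inv _ hd, nonsing_inv_mul_cancel_right _ _ hd, smul_smul,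
      hc]

section Cayley

variable {ι K : Type*} [Fintype ι] [DecidableEq ι] [Field K]

def cayley (X : Matrix ι ι K) : Matrix ι ι K := (X - 1) * (X + 1)⁻¹

lemma cayley_eq_inv_mul (X : Matrix ι ι K) : cayley X = (X + 1)⁻¹ * (X - 1) := by
  have h : Commute (X - 1) (X + 1) := show (X - 1) * (X + 1) = (X + 1) * (X - 1) by noncomm_ring
  rw [cayley, ← Matrix.zpow_neg_one]
  exact (Matrix.Commute.zpow_right h (-1)).eq

variable {X : Matrix ι ι K}

lemma one_sub_cayley_mul [NeZero (2 : K)] (hX : IsUnit (X + 1)) :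
    (1 - cayley X) * ((2⁻¹ : K) • (X + 1)) = 1 := by
  have hd := (isUnit_iff_isUnit_det _).mp hX
  rw [cayley, Matrix.mul_smul, Matrix.sub_mul, Matrix.one_mul, Matrix.mul_assoc,
    nonsing_inv_mul _ hd, Matrix.mul_one, show X + 1 - (X - 1) = (2 : K) • 1 by module, smul_smul,
    inv_mul_cancel₀ two_ne_zero, one_smul]

lemma isUnit_one_sub_cayley [NeZero (2 : K)] (hX : IsUnit (X + 1)) : IsUnit (1 - cayley X) :=
  IsUnit.of_mul_eq_one _ (one_sub_cayley_mul hX)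

lemma inv_one_sub_cayley [NeZero (2 : K)] (hX : IsUnit (X + 1)) :
    (1 - cayley X)⁻¹ = (2⁻¹ : K) • (X + 1) :=
  inv_eq_right_inv (one_sub_cayley_mul hX)

lemma cayley_mul_inv_one_sub_cayley [NeZero (2 : K)] (hX : IsUnit (X + 1)) :
    cayley X * (1 - cayley X)⁻¹ = (2⁻¹ : K) • (X - 1) := by
  rw [inv_one_sub_cayley hX, cayley, Matrix.mul_smul, Matrix.mul_assoc,
    nonsing_inv_mul _ ((isUnit_iff_isUnit_det _).mp hX), Matrix.mul_one]

lemma one_add_cayley_mul_inv_one_sub_cayley [NeZero (2 : K)] (hX : IsUnit (X + 1)) :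
    (1 + cayley X) * (1 - cayley X)⁻¹ = X := by
  have hd := (isUnit_iff_isUnit_det _).mp (isUnit_one_sub_cayley hX)
  rw [show 1 + cayley X = (1 - cayley X) + (2 : K) • cayley X by module, Matrix.add_mul,
    mul_nonsing_inv _ hd, Matrix.smul_mul, cayley_mul_inv_one_sub_cayley hX, smul_smul,
    mul_inv_cancel₀ two_ne_zero, one_smul]
  abel

lemma eq_cayley_of_one_add_mul_inv_one_sub (hX : IsUnit (X + 1)) {R : Matrix ι ι K}
    (hR : IsUnit (1 - R)) (h : (1 + R) * (1 - R)⁻¹ = X) : R = cayley X := by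
  have h1 : 1 + R = X * (1 - R) := by
    rw [← h, Matrix.mul_assoc, nonsing_inv_mul _ ((isUnit_iff_isUnit_det _).mp hR), Matrix.mul_one]
  have h2 : (X + 1) * R = X - 1 := by
    calc (X + 1) * R = (1 + R) + X * R - 1 := by noncomm_ring
      _ = X - 1 := by rw [h1]; noncomm_ring
  rw [cayley_eq_inv_mul, ← h2, nonsing_inv_mul_cancel_left _ _ ((isUnit_iff_isUnit_det _).mp hX)]

end Cayley

lemma bogoliubov_cayley {k : ℕ} {X : Matrix (Fin k ⊕ Fin k) (Fin k ⊕ Fin k) ℂ}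
    (hdu : DoubledUp X) (hskew : flatAdj X = -X) (hX : IsUnit (X + 1)) :
    Bogoliubov (cayley X) := by
  have hflat : flatAdj (X - 1) * (X - 1) = flatAdj (X + 1) * (X + 1) := by
    rw [flatAdj_sub, flatAdj_add, flatAdj_one, hskew]
    noncomm_ring
  have hR : flatAdj (cayley X) * cayley X = 1 := by
    calc flatAdj (cayley X) * cayley X
        = flatAdj (X + 1)⁻¹ * (flatAdj (X - 1) * (X - 1)) * (X + 1)⁻¹ := by
          simp only [cayley, flatAdj_mul, Matrix.mul_assoc]
      _ = (flatAdj (X + 1))⁻¹ * flatAdj (X + 1) * ((X + 1) * (X + 1)⁻¹) := by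
          simp only [hflat, flatAdj_inv, Matrix.mul_assoc]
      _ = 1 := by
          rw [nonsing_inv_mul _ ((isUnit_iff_isUnit_det _).mp hX.flatAdj),
            mul_nonsing_inv _ ((isUnit_iff_isUnit_det _).mp hX), Matrix.one_mul]
  exact ⟨(hdu.sub doubledUp_one).mul (hdu.add doubledUp_one).inv, mul_eq_one_comm.mp hR, hR⟩

lemma flatAdj_mul_smul_Jmat_mul_mul {k : ℕ} {P H : Matrix (Fin k ⊕ Fin k) (Fin k ⊕ Fin k) ℂ}
    (hP : flatAdj P = P) (hH : H.IsHermitian) {c : ℂ} (hc : starRingEnd ℂ c = -c) :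
    flatAdj (P * (c • (Jmat k * H)) * P) = -(P * (c • (Jmat k * H)) * P) := by
  rw [flatAdj_mul, flatAdj_mul, hP, flatAdj_smul_Jmat_mul hH, hc, neg_smul]
  simp only [Matrix.neg_mul, Matrix.mul_neg, Matrix.mul_assoc]

lemma conj_two_mul_I : starRingEnd ℂ (2 * Complex.I) = -(2 * Complex.I) := by
  rw [map_mul, Complex.conj_I, map_ofNat, mul_neg]

lemma neg_inv_I_div_two : -(Complex.I / 2)⁻¹ = 2 * Complex.I := by
  rw [inv_div, div_eq_mul_inv, Complex.inv_I]
  ring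

lemma drift_sub_feedback_eq {ι : Type*} [Fintype ι] [DecidableEq ι] {A B P X : Matrix ι ι ℂ}
    (h : B = A - (Complex.I / 2) • (P * X * P)) (Q : Matrix ι ι ℂ) :
    -Complex.I • A - (1 / 2 : ℂ) • (P * P) - Q - P * ((2⁻¹ : ℂ) • (X - 1)) * P
      = -Complex.I • B - Q := by
  rw [h, Matrix.mul_smul, Matrix.smul_mul, Matrix.mul_sub, Matrix.sub_mul, Matrix.mul_one,
    smul_sub (-Complex.I), smul_smul, show -Complex.I * (Complex.I / 2) = 2⁻¹ by
      rw [neg_mul, mul_div_assoc', Complex.I_mul_I]; ring]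
  module

/-- Feedback modification of the Hamiltonian of a general linear quantum
stochastic system.  With `Mb = M̄`, `Nt = Ñ = diag(√κ̃, √κ̃)` and
`X = 2i (Ñ^♭)⁻¹ (J M̄ − J M) Ñ⁻¹`:
(i) `X` is doubled-up, ♭-skew-Hermitian, and is the unique solution of
`J M̄ = J M − (i/2) Ñ^♭ X Ñ`;
(ii) if `I + X` is invertible then `R = (X − I)(X + I)⁻¹` is Bogoliubov,
`I − R` is invertible, `(I + R)(I − R)⁻¹ = X`, and `R` is the unique such
Bogoliubov matrix without eigenvalue `1`;
(iii) the modified drift matrix equals the drift matrix with Hamiltonian `M̄`. -/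
theorem feedback_hamiltonian_general (n m : ℕ)
    (M Mb : Matrix (Fin n ⊕ Fin n) (Fin n ⊕ Fin n) ℂ)
    (hM : M.IsHermitian) (hMdu : DoubledUp M)
    (hMb : Mb.IsHermitian) (hMbdu : DoubledUp Mb)
    (κ : Fin n → ℝ) (hκ : ∀ i, 0 < κ i)
    (Nt : Matrix (Fin n ⊕ Fin n) (Fin n ⊕ Fin n) ℂ)
    (hNt : Nt = Matrix.diagonal (Sum.elim (fun i => (Real.sqrt (κ i) : ℂ))
      (fun i => (Real.sqrt (κ i) : ℂ))))
    (X : Matrix (Fin n ⊕ Fin n) (Fin n ⊕ Fin n) ℂ)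
    (hX : X = (2 * Complex.I) • ((flatAdj Nt)⁻¹ * (Jmat n * Mb - Jmat n * M) * Nt⁻¹)) :
    -- (i)
    DoubledUp X ∧ flatAdj X = -X ∧
    Jmat n * Mb = Jmat n * M - (Complex.I / 2) • (flatAdj Nt * X * Nt) ∧
    (∀ X' : Matrix (Fin n ⊕ Fin n) (Fin n ⊕ Fin n) ℂ,
      Jmat n * Mb = Jmat n * M - (Complex.I / 2) • (flatAdj Nt * X' * Nt) → X' = X) ∧
    -- (ii) and (iii)
    (IsUnit ((1 : Matrix (Fin n ⊕ Fin n) (Fin n ⊕ Fin n) ℂ) + X) →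
      Bogoliubov ((X - 1) * (X + 1)⁻¹) ∧
      IsUnit ((1 : Matrix (Fin n ⊕ Fin n) (Fin n ⊕ Fin n) ℂ) - (X - 1) * (X + 1)⁻¹) ∧
      (1 + (X - 1) * (X + 1)⁻¹) * (1 - (X - 1) * (X + 1)⁻¹)⁻¹ = X ∧
      (∀ R' : Matrix (Fin n ⊕ Fin n) (Fin n ⊕ Fin n) ℂ, Bogoliubov R' →
        IsUnit ((1 : Matrix (Fin n ⊕ Fin n) (Fin n ⊕ Fin n) ℂ) - R') →
        (1 + R') * (1 - R')⁻¹ = X → R' = (X - 1) * (X + 1)⁻¹) ∧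
      (∀ N : Matrix (Fin m ⊕ Fin m) (Fin n ⊕ Fin n) ℂ, DoubledUp N →
        (-Complex.I) • (Jmat n * M) - (1 / 2 : ℂ) • (flatAdj Nt * Nt)
            - (1 / 2 : ℂ) • (flatAdj N * N)
            - flatAdj Nt * (((X - 1) * (X + 1)⁻¹)
                * (1 - (X - 1) * (X + 1)⁻¹)⁻¹) * Nt
          = (-Complex.I) • (Jmat n * Mb) - (1 / 2 : ℂ) • (flatAdj N * N))) := by
  have hNtU : IsUnit Nt :=
    hNt ▸ isUnit_diagonal_ofReal _ fun i => (Real.sqrt_pos.mpr (hκ i)).ne'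
  have hNtflat : flatAdj Nt = Nt := hNt ▸ flatAdj_diagonal_ofReal _
  have hNtdu : DoubledUp Nt := hNt ▸ doubledUp_diagonal_ofReal _
  have hsolve (Y) :
      Jmat n * Mb = Jmat n * M - (Complex.I / 2) • (flatAdj Nt * Y * Nt) ↔ Y = X := by
    rw [hX, hNtflat, ← neg_inv_I_div_two]
    exact eq_sub_smul_mul_mul_iff hNtU (by simp) _ _ _
  have hX' : X = Nt⁻¹ * ((2 * Complex.I) • (Jmat n * (Mb - M))) * Nt⁻¹ := by
    rw [hX, hNtflat, ← Matrix.mul_sub, Matrix.mul_smul, Matrix.smul_mul]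
  have hdu : DoubledUp X := by
    rw [hX']
    exact (hNtdu.inv.mul ((hMbdu.sub hMdu).smul_Jmat_mul conj_two_mul_I)).mul hNtdu.inv
  have hskew : flatAdj X = -X := by
    rw [hX']
    exact flatAdj_mul_smul_Jmat_mul_mul (by rw [flatAdj_inv, hNtflat]) (hMb.sub hM) conj_two_mul_I
  have heq := (hsolve X).mpr rfl
  refine ⟨hdu, hskew, heq, fun X' h => (hsolve X').mp h, fun hu => ?_⟩
  have hX1 : IsUnit (X + 1) := add_comm X 1 ▸ hu
  refine ⟨bogoliubov_cayley hdu hskew hX1, isUnit_one_sub_cayley hX1,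
    one_add_cayley_mul_inv_one_sub_cayley hX1,
    fun R' _ hR' h => eq_cayley_of_one_add_mul_inv_one_sub hX1 hR' h, fun N _ => ?_⟩
  change _ - flatAdj Nt * (cayley X * (1 - cayley X)⁻¹) * Nt = _
  rw [cayley_mul_inv_one_sub_cayley hX1, hNtflat]
  rw [hNtflat] at heq
  exact drift_sub_feedback_eq heq _
end
end

section
/- Let λ ∈ ℝ with λ > −1/2, set c = √(λ + 1/2), and let x ∈ ℝ satisfy sinh(2x) = 1/(2c²). Let N̄ be the 4×4 real matrix with rows (c·cosh x, sinh x, 0, −c·sinh x), (0, c·cosh x, c·sinh x, cosh x), (0, −c·sinh x, c·cosh x, sinh x), (c·sinh x, cosh x, 0, c·cosh x). Then N̄ is doubled-up and N̄^♭·N̄ = 𝒩̄, where 𝒩̄ is the 4×4 matrix with rows (λ + 1/2, 0, 0, −1/2), (0, λ − 1/2, 1/2, 0), (0, −1/2, λ + 1/2, 0), (1/2, 0, 0, λ − 1/2). Moreover, 𝒩̄ = 𝒯₄^{-1}·diag(𝐣₂(λ), 𝐣₂(λ))·𝒯₄, where 𝐣₂(λ) = [[λ, 1],[0, λ]] is the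 2×2 upper Jordan block with eigenvalue λ and 𝒯₄ = (1/√2)·[[1, 0, 0, 1],[1, 0, 0, −1],[0, 1, 1, 0],[0, −1, 1, 0]]. -/
/-!
The matrix `N̄` has the block form `[[A, B], [B, A]]` with real `2 × 2` blocks.
Conjugation by `Σ` only swaps blocks, so `N̄` is doubled-up, and the ♭-adjoint turns
`N̄^♭ N̄` into `[[AᵀA - BᵀB, AᵀB - BᵀA], [AᵀB - BᵀA, AᵀA - BᵀB]]`. With `c² = λ + 1/2`
the first block reduces to `diag(λ + 1/2, λ - 1/2)` by `cosh² - sinh² = 1`, and the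
second to the antisymmetric block `±1/2` by `2c² sinh 2x = 1`. Finally `𝒯₄` is
orthogonal and intertwines `𝒩̄` with `diag(𝐣₂(λ), 𝐣₂(λ))`.
-/

open Matrix

noncomputable section

section Blocks

variable {r s : ℕ}

theorem Sig_mul_fromBlocks_mul_Sig (A B C D : Matrix (Fin r) (Fin s) ℂ) :
    Sig r * fromBlocks A B C D * Sig s = fromBlocks D C B A := by
  simp [Sig, fromBlocks_multiply]

theorem doubledUp_map_ofReal_fromBlocks (A B : Matrix (Fin r) (Fin s) ℝ) :
    DoubledUp ((fromBlocks A B B A).map (fun t => (t : ℂ))) := by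
  simp only [DoubledUp, fromBlocks_map, Sig_mul_fromBlocks_mul_Sig, Matrix.map_map,
    Function.comp_def, Complex.conj_ofReal]

theorem flatAdj_fromBlocks (A B C D : Matrix (Fin r) (Fin s) ℂ) :
    flatAdj (fromBlocks A B C D) = fromBlocks Aᴴ (-Cᴴ) (-Bᴴ) Dᴴ := by
  simp [flatAdj, Jmat, fromBlocks_conjTranspose, fromBlocks_multiply]

theorem flatAdj_mul_self_fromBlocks (A B : Matrix (Fin r) (Fin s) ℂ) :
    flatAdj (fromBlocks A B B A) * fromBlocks A B B A =
      fromBlocks (Aᴴ * A - Bᴴ * B) (Aᴴ * B - Bᴴ * A) (Aᴴ * B - Bᴴ * A)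
        (Aᴴ * A - Bᴴ * B) := by
  rw [flatAdj_fromBlocks, fromBlocks_multiply]
  congr 1 <;> simp only [Matrix.neg_mul] <;> abel

theorem conjTranspose_map_ofReal {m n : Type*} (A : Matrix m n ℝ) :
    (A.map (fun t => (t : ℂ)))ᴴ = Aᵀ.map (fun t => (t : ℂ)) := by
  rw [← conjTranspose_eq_transpose_of_trivial, conjTranspose_map]
  exact fun t => (Complex.conj_ofReal t).symm

theorem map_ofReal_mul {l m n : Type*} [Fintype m] (A : Matrix l m ℝ) (B : Matrix m n ℝ) :
    (A * B).map (fun t => (t : ℂ)) = A.map (fun t => (t : ℂ)) * B.map (fun t => (t : ℂ)) :=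
  Matrix.map_mul (f := Complex.ofRealHom)

theorem flatAdj_mul_self_map_ofReal_fromBlocks (A B : Matrix (Fin r) (Fin s) ℝ) :
    flatAdj ((fromBlocks A B B A).map (fun t => (t : ℂ))) *
        (fromBlocks A B B A).map (fun t => (t : ℂ)) =
      (fromBlocks (Aᵀ * A - Bᵀ * B) (Aᵀ * B - Bᵀ * A) (Aᵀ * B - Bᵀ * A)
        (Aᵀ * A - Bᵀ * B)).map (fun t => (t : ℂ)) := by
  simp only [fromBlocks_map, flatAdj_mul_self_fromBlocks, conjTranspose_map_ofReal,
    ← map_ofReal_mul, ← Matrix.map_sub _ Complex.ofReal_sub]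

end Blocks

section Coupling

open Real

variable (c x : ℝ)

def couplingA : Matrix (Fin 2) (Fin 2) ℝ := !![c * cosh x, sinh x; 0, c * cosh x]

def couplingB : Matrix (Fin 2) (Fin 2) ℝ := !![0, -(c * sinh x); c * sinh x, cosh x]

theorem couplingA_transpose_mul_self_sub {lam : ℝ} (hc : c ^ 2 = lam + 1 / 2) :
    (couplingA c x)ᵀ * couplingA c x - (couplingB c x)ᵀ * couplingB c x =
      !![lam + 1 / 2, 0; 0, lam - 1 / 2] := by
  have := cosh_sq_sub_sinh_sq x
  ext i j; fin_cases i <;> fin_cases j <;>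
    simp only [couplingA, couplingB, Matrix.sub_apply, Matrix.mul_apply, Fin.sum_univ_two,
      transpose_apply, of_apply, cons_val', cons_val_zero, cons_val_one, cons_val_fin_one,
      Fin.isValue, Fin.zero_eta, Fin.mk_one]
  · linear_combination c ^ 2 * this + hc
  · ring
  · ring
  · linear_combination (c ^ 2 - 1) * this + hc

theorem couplingA_transpose_mul_couplingB_sub (h : 2 * c ^ 2 * sinh (2 * x) = 1) :
    (couplingA c x)ᵀ * couplingB c x - (couplingB c x)ᵀ * couplingA c x =
      !![0, -(1 / 2); 1 / 2, 0] := by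
  rw [sinh_two_mul] at h
  ext i j; fin_cases i <;> fin_cases j <;>
    simp only [couplingA, couplingB, Matrix.sub_apply, Matrix.mul_apply, Fin.sum_univ_two,
      transpose_apply, of_apply, cons_val', cons_val_zero, cons_val_one, cons_val_fin_one,
      Fin.isValue, Fin.zero_eta, Fin.mk_one]
  · ring
  · linear_combination -h / 2
  · linear_combination h / 2
  · ring

end Coupling

theorem eq_inv_mul_mul_of_mul_eq {n K : Type*} [Fintype n] [DecidableEq n] [CommRing K]
    {T N D : Matrix n n K} (hT : IsUnit T.det) (h : T * N = D * T) : N = T⁻¹ * D * T := by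
  rw [Matrix.mul_assoc, ← h, nonsing_inv_mul_cancel_left _ _ hT]

def jordanBasisChange : Matrix (Fin 2 ⊕ Fin 2) (Fin 2 ⊕ Fin 2) ℝ :=
  (√2)⁻¹ • fromBlocks !![1, 0; 1, 0] !![0, 1; 0, -1] !![0, 1; 0, -1] !![1, 0; 1, 0]

theorem jordanBasisChange_mul_transpose : jordanBasisChange * jordanBasisChangeᵀ = 1 := by
  have hsqrt : (√2)⁻¹ * (√2)⁻¹ = (2⁻¹ : ℝ) := by
    rw [← mul_inv, Real.mul_self_sqrt zero_le_two]
  ext (i|i) (j|j) <;> fin_cases i <;> fin_cases j <;>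
    norm_num [jordanBasisChange, Matrix.mul_apply, Matrix.one_apply, Sum.inl_ne_inr,
      Sum.inr_ne_inl, Fintype.sum_sum_type, Fin.sum_univ_two, hsqrt]

theorem jordanBasisChange_mul_eq (lam : ℝ) :
    jordanBasisChange *
        fromBlocks !![lam + 1 / 2, 0; 0, lam - 1 / 2] !![0, -(1 / 2 : ℝ); 1 / 2, 0]
          !![0, -(1 / 2 : ℝ); 1 / 2, 0] !![lam + 1 / 2, 0; 0, lam - 1 / 2] =
      fromBlocks !![lam, 1; 0, lam] 0 0 !![lam, 1; 0, lam] * jordanBasisChange := by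
  ext (i|i) (j|j) <;> fin_cases i <;> fin_cases j <;>
    simp only [jordanBasisChange, Matrix.mul_apply, Matrix.smul_apply, smul_eq_mul,
      Fintype.sum_sum_type, Fin.sum_univ_two, fromBlocks_apply₁₁, fromBlocks_apply₁₂,
      fromBlocks_apply₂₁, fromBlocks_apply₂₂, Matrix.zero_apply, of_apply, cons_val',
      cons_val_zero, cons_val_one, cons_val_fin_one, Fin.isValue, Fin.zero_eta, Fin.mk_one] <;>
    ring

theorem map_ofReal_eq_inv_mul_mul {n : Type*} [Fintype n] [DecidableEq n]
    {T N D : Matrix n n ℝ} (hT : T * Tᵀ = 1) (h : T * N = D * T) :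
    N.map (fun t => (t : ℂ)) =
      (T.map (fun t => (t : ℂ)))⁻¹ * D.map (fun t => (t : ℂ)) * T.map (fun t => (t : ℂ)) := by
  have hT' : T.map (fun t => (t : ℂ)) * Tᵀ.map (fun t => (t : ℂ)) = 1 := by
    rw [← map_ofReal_mul, hT, Matrix.map_one _ Complex.ofReal_zero Complex.ofReal_one]
  refine eq_inv_mul_mul_of_mul_eq (isUnit_det_of_right_inverse hT') ?_
  rw [← map_ofReal_mul, h, map_ofReal_mul]

theorem map_ofReal_jordanBasisChange :
    jordanBasisChange.map (fun t => (t : ℂ)) = ((Real.sqrt 2 : ℂ))⁻¹ •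
      (Matrix.fromBlocks
        !![(1 : ℝ), 0; 1, 0] !![(0 : ℝ), 1; 0, -1]
        !![(0 : ℝ), 1; 0, -1] !![(1 : ℝ), 0; 1, 0]).map (fun t => (t : ℂ)) := by
  ext i j
  simp [jordanBasisChange]

/-- Canonical coupling block for a real eigenvalue `λ > −1/2` of `N^♭N` with a
Jordan block of size 2: with `c = √(λ + 1/2)` and `sinh(2x) = 1/(2c²)`, the
explicit `4 × 4` matrix `N̄` is doubled-up and satisfies `N̄^♭N̄ = 𝒩̄`, where
`𝒩̄` is similar, via `𝒯₄`, to `diag(𝐣₂(λ), 𝐣₂(λ))`. -/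
theorem jordan_block_two_coupling (lam : ℝ) (hlam : -(1 / 2 : ℝ) < lam)
    (c x : ℝ) (hc : c = Real.sqrt (lam + 1 / 2))
    (hx : Real.sinh (2 * x) = 1 / (2 * c ^ 2))
    (Nbar Ncal : Matrix (Fin 2 ⊕ Fin 2) (Fin 2 ⊕ Fin 2) ℂ)
    (T4 : Matrix (Fin 2 ⊕ Fin 2) (Fin 2 ⊕ Fin 2) ℂ)
    (hNbar : Nbar =
      (Matrix.fromBlocks
        !![c * Real.cosh x, Real.sinh x; 0, c * Real.cosh x]
        !![0, -(c * Real.sinh x); c * Real.sinh x, Real.cosh x]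
        !![0, -(c * Real.sinh x); c * Real.sinh x, Real.cosh x]
        !![c * Real.cosh x, Real.sinh x; 0, c * Real.cosh x]).map (fun t => (t : ℂ)))
    (hNcal : Ncal =
      (Matrix.fromBlocks
        !![lam + 1 / 2, 0; 0, lam - 1 / 2]
        !![0, -(1 / 2 : ℝ); 1 / 2, 0]
        !![0, -(1 / 2 : ℝ); 1 / 2, 0]
        !![lam + 1 / 2, 0; 0, lam - 1 / 2]).map (fun t => (t : ℂ)))
    (hT4 : T4 = ((Real.sqrt 2 : ℂ))⁻¹ •
      (Matrix.fromBlocks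
        !![(1 : ℝ), 0; 1, 0] !![(0 : ℝ), 1; 0, -1]
        !![(0 : ℝ), 1; 0, -1] !![(1 : ℝ), 0; 1, 0]).map (fun t => (t : ℂ))) :
    DoubledUp Nbar ∧
    flatAdj Nbar * Nbar = Ncal ∧
    Ncal = T4⁻¹ *
        ((Matrix.fromBlocks !![lam, 1; 0, lam] 0 0 !![lam, 1; 0, lam]).map
          (fun t => (t : ℂ))) * T4 := by
  have hpos : 0 < lam + 1 / 2 := by linarith
  have hc2 : c ^ 2 = lam + 1 / 2 := by rw [hc, Real.sq_sqrt hpos.le]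
  have hsinh : 2 * c ^ 2 * Real.sinh (2 * x) = 1 := by
    rw [hx, mul_one_div_cancel (by rw [hc2]; positivity)]
  subst hNbar hNcal hT4
  refine ⟨doubledUp_map_ofReal_fromBlocks _ _, ?_, ?_⟩
  · have h := flatAdj_mul_self_map_ofReal_fromBlocks (couplingA c x) (couplingB c x)
    rwa [couplingA_transpose_mul_self_sub c x hc2,
      couplingA_transpose_mul_couplingB_sub c x hsinh] at h
  · rw [← map_ofReal_jordanBasisChange]
    exact map_ofReal_eq_inv_mul_mul jordanBasisChange_mul_transpose (jordanBasisChange_mul_eq lam)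
end
end
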